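/- arXiv:2103.11309 — 3 statements merged into one kernel-verified Lean document; each statement's English description precedes it below -/
import Mathlib

section
/- Let A be a real n×n matrix whose off-diagonal entries are nonnegative (a Metzler matrix). Then for every t ≥ 0, all entries of the matrix exponential exp(tA) are nonnegative. -/
/-!
Adding a large multiple `c • 1` of the identity to a Metzler matrix makes all its entries
nonnegative, and then every term of the exponential series of `t • (A + c • 1)` is entrywise
nonnegative. Since `c • 1` is central, `exp (t • A) = exp (-(t * c)) • exp (t • (A + c • 1))`.
-/

open NormedSpace Nat

namespace Matrix

variable {m : Type*} [Fintype m] [DecidableEq m]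

theorem hasSum_exp_apply (A : Matrix m m ℝ) (i j : m) :
    HasSum (fun k : ℕ => ((k ! : ℝ)⁻¹ • A ^ k) i j) (exp A i j) := by
  let : SeminormedRing (Matrix m m ℝ) := Matrix.linftyOpSemiNormedRing
  let : NormedRing (Matrix m m ℝ) := Matrix.linftyOpNormedRing
  let : NormedAlgebra ℝ (Matrix m m ℝ) := Matrix.linftyOpNormedAlgebra
  exact Pi.hasSum.mp (Pi.hasSum.mp (exp_series_hasSum_exp' A) i) j

theorem exp_apply_nonneg {A : Matrix m m ℝ} (hA : ∀ i j, 0 ≤ A i j) (i j : m) :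
    0 ≤ exp A i j := by
  refine (hasSum_exp_apply A i j).nonneg fun k => ?_
  rw [smul_apply]
  exact smul_nonneg (by positivity) (pow_apply_nonneg hA k i j)

theorem exp_add_smul_one (A : Matrix m m ℝ) (s : ℝ) :
    exp (A + s • 1) = Real.exp s • exp A := by
  rw [exp_add_of_commute _ _ ((Commute.one_right A).smul_right s), smul_one_eq_diagonal,
    exp_diagonal, Pi.exp_def, ← Real.exp_eq_exp_ℝ, ← smul_one_eq_diagonal, mul_smul_one]

theorem exists_nonneg_add_smul_one {R : Type*} [Ring R] [LinearOrder R] [IsOrderedRing R]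
    {A : Matrix m m R} (hA : ∀ i j, i ≠ j → 0 ≤ A i j) :
    ∃ c : R, ∀ i j, 0 ≤ (A + c • 1) i j := by
  refine ⟨∑ k, |A k k|, fun i j => ?_⟩
  rcases eq_or_ne i j with rfl | hij
  · have : |A i i| ≤ ∑ k, |A k k| :=
      Finset.single_le_sum (fun k _ => abs_nonneg (A k k)) (Finset.mem_univ i)
    simpa using (add_abs_nonneg (A i i)).trans (by gcongr)
  · simpa [one_apply_ne hij] using hA i j hij

end Matrix

open Matrix in
/-- If `A` is a Metzler matrix (nonnegative off-diagonal entries), then every entry of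
`exp (t • A)` is nonnegative for all `t ≥ 0`. -/
theorem metzler_exp_nonneg {n : ℕ} (A : Matrix (Fin n) (Fin n) ℝ)
    (hA : ∀ i j, i ≠ j → 0 ≤ A i j) :
    ∀ t : ℝ, 0 ≤ t → ∀ i j, 0 ≤ NormedSpace.exp (t • A) i j := by
  intro t ht i j
  obtain ⟨c, hc⟩ := exists_nonneg_add_smul_one hA
  have hshift : t • A = t • (A + c • 1) + (-(t * c)) • 1 := by module
  rw [hshift, exp_add_smul_one, Matrix.smul_apply]
  exact smul_nonneg (Real.exp_pos _).le (exp_apply_nonneg (fun i j => mul_nonneg ht (hc i j)) i j)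
end

section
/- Let A, A' ∈ ℝ^{n×n}, x₀, x₀' ∈ ℝ^n, C, C' ∈ ℝ^{k×n}. If the transfer matrices agree as rational functions, i.e., C (sI − A)^{-1} x₀ = C' (sI − A')^{-1} x₀' for all s ∈ ℂ with sufficiently large real part (say Re(s) > max(‖A‖, ‖A'‖)), then the outputs agree: C exp(tA) x₀ = C' exp(tA') x₀' for all t ≥ 0. -/
/-!
For `z ≠ 0` the transfer function satisfies `C (z⁻¹ I - A)⁻¹ x = z • C (I - z A)⁻¹ x`, and
`z ↦ C (I - z A)⁻¹ x` is analytic at `0` with Taylor coefficients the Markov parameters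
`C Aᵐ x` (Neumann series). Agreement of two transfer functions for all large real `s` is
agreement of these analytic functions on `(0, ε)`, so by the identity theorem their Taylor
coefficients coincide. The outputs `C exp(tA) x = ∑ tᵐ/m! · C Aᵐ x` are then equal term by term.
-/

open Matrix Filter Topology

namespace Matrix
variable {n : Type*} [Fintype n] [DecidableEq n]

section Field
variable {K : Type*} [Field K]

theorem inv_smul₀ {z : K} (hz : z ≠ 0) (M : Matrix n n K) : (z • M)⁻¹ = z⁻¹ • M⁻¹ := by
  by_cases hM : IsUnit M.det
  · simpa [Units.smul_def] using inv_smul' M (Units.mk0 z hz) hM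
  · have hzM : ¬ IsUnit (z • M).det := by simpa [det_smul, hz] using hM
    rw [nonsing_inv_apply_not_isUnit _ hM, nonsing_inv_apply_not_isUnit _ hzM, smul_zero]

theorem inv_one_sub_smul {z : K} (hz : z ≠ 0) (A : Matrix n n K) :
    (1 - z • A)⁻¹ = z⁻¹ • (z⁻¹ • 1 - A)⁻¹ := by
  rw [← inv_smul₀ hz, smul_sub, smul_smul, mul_inv_cancel₀ hz, one_smul]

theorem map_inv {L : Type*} [Field L] (f : K →+* L) (M : Matrix n n K) :
    M⁻¹.map f = (M.map f)⁻¹ := by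
  rw [← f.mapMatrix_apply, ← f.mapMatrix_apply, inv_def, inv_def, Ring.inverse_eq_inv',
    Ring.inverse_eq_inv', ← f.map_det, ← f.map_adjugate, RingHom.mapMatrix_apply,
    RingHom.mapMatrix_apply, Matrix.map_smul' _ _ _ (map_mul f), map_inv₀]

theorem map_mulVec_inv_smul_one_sub_mulVec {L : Type*} [Field L] (f : K →+* L) {p : Type*}
    (C : Matrix p n K) (A : Matrix n n K) (x : n → K) (r : K) :
    C.map f *ᵥ ((f r • 1 - A.map f)⁻¹ *ᵥ (f ∘ x)) = f ∘ (C *ᵥ ((r • 1 - A)⁻¹ *ᵥ x)) := by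
  have hres : f r • 1 - A.map f = (r • 1 - A).map f := by
    ext i j
    by_cases hij : i = j <;> simp [hij]
  ext i
  rw [hres, ← map_inv, Function.comp_apply, RingHom.map_mulVec]
  congr 1
  ext j
  exact (f.map_mulVec _ _ j).symm

end Field

section Analytic
open scoped Matrix.Norms.Operator
variable {𝕜 : Type*} [NontriviallyNormedField 𝕜] [CompleteSpace 𝕜]
  {n' p : Type*} [Fintype n'] [DecidableEq n'] [Fintype p]

theorem hasFPowerSeriesAt_mulVec_inv_one_sub_smul_mulVec (C : Matrix p n 𝕜) (A : Matrix n n 𝕜)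
    (x : n → 𝕜) :
    HasFPowerSeriesAt (fun z : 𝕜 => C *ᵥ ((1 - z • A)⁻¹ *ᵥ x))
      (fun m => ContinuousMultilinearMap.mkPiRing 𝕜 (Fin m) (C *ᵥ (A ^ m *ᵥ x))) 0 := by
  let L : Matrix n n 𝕜 →L[𝕜] (p → 𝕜) :=
    LinearMap.toContinuousLinearMap (C.mulVecLin ∘ₗ (mulVecBilin 𝕜 𝕜).flip x)
  -- The operator-norm uniformity is not reducibly the product one, so completeness is not found.
  have : HasSummableGeomSeries (Matrix n n 𝕜) :=
    @instHasSummableGeomSeriesOfCompleteSpace _ _ (FiniteDimensional.complete 𝕜 _)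
  have hfun : (fun z : 𝕜 => C *ᵥ ((1 - z • A)⁻¹ *ᵥ x)) = L ∘ fun z => Ring.inverse (1 - z • A) := by
    ext z : 1
    simp [L, nonsing_inv_eq_ringInverse]
  have hser : (fun m => ContinuousMultilinearMap.mkPiRing 𝕜 (Fin m) (C *ᵥ (A ^ m *ᵥ x))) =
      L.compFormalMultilinearSeries
        fun m => ContinuousMultilinearMap.mkPiRing 𝕜 (Fin m) (A ^ m) := by
    funext m
    ext y
    change _ = L (ContinuousMultilinearMap.mkPiRing 𝕜 (Fin m) (A ^ m) fun _ => 1) y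
    simp only [ContinuousMultilinearMap.mkPiRing_apply, map_smul]
    rfl
  rw [hfun, hser]
  exact (L.comp_hasFPowerSeriesOnBall
    (spectrum.hasFPowerSeriesOnBall_inverse_one_sub_smul 𝕜 A)).hasFPowerSeriesAt

theorem mulVec_pow_mulVec_eq_of_frequently_eq {C : Matrix p n 𝕜} {C' : Matrix p n' 𝕜}
    {A : Matrix n n 𝕜} {A' : Matrix n' n' 𝕜} {x : n → 𝕜} {x' : n' → 𝕜}
    (h : ∃ᶠ z in 𝓝[≠] (0 : 𝕜), C *ᵥ ((1 - z • A)⁻¹ *ᵥ x) = C' *ᵥ ((1 - z • A')⁻¹ *ᵥ x')) (m : ℕ) :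
    C *ᵥ (A ^ m *ᵥ x) = C' *ᵥ (A' ^ m *ᵥ x') := by
  have hp := hasFPowerSeriesAt_mulVec_inv_one_sub_smul_mulVec C A x
  have hp' := hasFPowerSeriesAt_mulVec_inv_one_sub_smul_mulVec C' A' x'
  have hseries := hp.eq_formalMultilinearSeries_of_eventually hp'
    ((hp.analyticAt.frequently_eq_iff_eventually_eq hp'.analyticAt).1 h)
  exact ContinuousMultilinearMap.mkPiRing_eq_iff.1 (congrFun hseries m)

theorem mulVec_pow_mulVec_eq_of_eventually_eq {C : Matrix p n ℝ} {C' : Matrix p n' ℝ}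
    {A : Matrix n n ℝ} {A' : Matrix n' n' ℝ} {x : n → ℝ} {x' : n' → ℝ}
    (h : ∀ᶠ s : ℝ in atTop, C *ᵥ ((s • 1 - A)⁻¹ *ᵥ x) = C' *ᵥ ((s • 1 - A')⁻¹ *ᵥ x')) (m : ℕ) :
    C *ᵥ (A ^ m *ᵥ x) = C' *ᵥ (A' ^ m *ᵥ x') := by
  refine mulVec_pow_mulVec_eq_of_frequently_eq ?_ m
  have hsmall := (tendsto_inv_nhdsGT_zero.eventually h).and self_mem_nhdsWithin
  refine (hsmall.frequently.filter_mono (nhdsWithin_mono _ fun z (hz : 0 < z) => hz.ne')).mono ?_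
  rintro z ⟨hz, hz0 : 0 < z⟩
  rw [inv_one_sub_smul hz0.ne', inv_one_sub_smul hz0.ne', smul_mulVec, smul_mulVec, mulVec_smul,
    mulVec_smul, hz]

end Analytic

section Exp
variable {𝕂 : Type*} [RCLike 𝕂] {p : Type*}

theorem hasSum_mulVec_exp_mulVec (C : Matrix p n 𝕂) (A : Matrix n n 𝕂) (x : n → 𝕂) :
    HasSum (fun m => (m.factorial⁻¹ : 𝕂) • C *ᵥ (A ^ m *ᵥ x)) (C *ᵥ (NormedSpace.exp A *ᵥ x)) := by
  have hexp : HasSum (fun m => (m.factorial⁻¹ : 𝕂) • A ^ m) (NormedSpace.exp A) := by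
    open scoped Matrix.Norms.Operator in
    rw [NormedSpace.exp_eq_tsum 𝕂]
    exact (NormedSpace.expSeries_summable' A).hasSum
  have := hexp.map (C.mulVecLin ∘ₗ (mulVecBilin 𝕂 𝕂).flip x)
    (continuous_const.matrix_mulVec (continuous_id.matrix_mulVec continuous_const))
  simpa only [LinearMap.coe_comp, Function.comp_def, LinearMap.flip_apply, mulVecBilin_apply,
    mulVecLin_apply, smul_mulVec, mulVec_smul] using this

end Exp
end Matrix

/-- If the transfer matrices `C (sI - A)⁻¹ x₀` of two uncontrolled LTI systems agree
for all `s` with `Re s > max ‖A‖ ‖A'‖` (operator norms, over `ℂ`), then the outputs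
`C exp(tA) x₀` agree for all `t ≥ 0`. -/
theorem lti_output_eq_of_transfer_eq {n k : ℕ}
    (A A' : Matrix (Fin n) (Fin n) ℝ) (x₀ x₀' : Fin n → ℝ)
    (C C' : Matrix (Fin k) (Fin n) ℝ)
    (h : ∀ s : ℂ,
      max ‖Matrix.toEuclideanCLM (𝕜 := ℂ) (A.map (algebraMap ℝ ℂ))‖
          ‖Matrix.toEuclideanCLM (𝕜 := ℂ) (A'.map (algebraMap ℝ ℂ))‖ < s.re →
      (C.map (algebraMap ℝ ℂ)).mulVec
          (((s • (1 : Matrix (Fin n) (Fin n) ℂ) - A.map (algebraMap ℝ ℂ))⁻¹).mulVec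
            (fun i => (x₀ i : ℂ))) =
        (C'.map (algebraMap ℝ ℂ)).mulVec
          (((s • (1 : Matrix (Fin n) (Fin n) ℂ) - A'.map (algebraMap ℝ ℂ))⁻¹).mulVec
            (fun i => (x₀' i : ℂ)))) :
    ∀ t : ℝ, 0 ≤ t →
      C.mulVec ((NormedSpace.exp (t • A)).mulVec x₀) =
        C'.mulVec ((NormedSpace.exp (t • A')).mulVec x₀') := by
  generalize (max _ _ : ℝ) = R at h
  have hreal : ∀ᶠ s : ℝ in atTop, C *ᵥ ((s • 1 - A)⁻¹ *ᵥ x₀) = C' *ᵥ ((s • 1 - A')⁻¹ *ᵥ x₀') := by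
    filter_upwards [eventually_gt_atTop R] with s hs
    apply (algebraMap ℝ ℂ).injective.comp_left
    dsimp only
    rw [← map_mulVec_inv_smul_one_sub_mulVec, ← map_mulVec_inv_smul_one_sub_mulVec]
    exact h s (by simpa using hs)
  have hmarkov := mulVec_pow_mulVec_eq_of_eventually_eq hreal
  intro t _
  refine (hasSum_mulVec_exp_mulVec C (t • A) x₀).unique ?_
  simpa only [smul_pow, smul_mulVec, mulVec_smul, hmarkov] using
    hasSum_mulVec_exp_mulVec C' (t • A') x₀'
end

section
/- Markov parameters of an n-dimensional realization are determined by the first 2n of them: if A, A' ∈ ℝ^{n×n}, x₀, x₀' ∈ ℝ^n, C, C' ∈ ℝ^{k×n} satisfy C A^m x₀ = C' (A')^m x₀' for all m ∈ {0, 1, …, 2n − 1}, then C A^m x₀ = C' (A')^m x₀' for all natural numbers m. -/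
/-!
Put `a = (A, A')` in the product algebra of matrices. The monic polynomial
`p = χ_A * χ_A'` of degree `2n` annihilates `a` by Cayley–Hamilton, so every power of `a` is an
`ℝ`-linear combination of `a ^ 0, …, a ^ (2n - 1)`. The difference of the two Markov parameters
is linear in `a ^ m`, and it vanishes on these first `2n` powers.
-/

open Matrix Polynomial

theorem Polynomial.pow_mem_span_pow_lt_natDegree {R S : Type*} [CommRing R] [Ring S]
    [Algebra R S] {p : R[X]} (hp : p.Monic) {a : S} (ha : aeval a p = 0) (m : ℕ) :
    a ^ m ∈ Submodule.span R ((a ^ ·) '' Set.Iio p.natDegree) := by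
  by_cases hp1 : p = 1
  · have : Subsingleton S := subsingleton_of_zero_eq_one (by simpa [hp1] using ha.symm)
    simp [Subsingleton.elim (a ^ m) 0]
  have hrem : a ^ m = ∑ i ∈ Finset.range p.natDegree, (X ^ m %ₘ p).coeff i • a ^ i := by
    rw [← aeval_eq_sum_range' (natDegree_modByMonic_lt _ hp hp1),
      aeval_modByMonic_eq_self_of_root ha, aeval_X_pow]
  rw [hrem]
  exact Submodule.sum_mem _ fun i hi => Submodule.smul_mem _ _
    (Submodule.subset_span ⟨i, Finset.mem_range.mp hi, rfl⟩)

/-- If the first `2n` Markov parameters of two `n`-dimensional realizations agree, then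
all Markov parameters agree (by Cayley–Hamilton). -/
theorem markov_determined_by_first_2n {n k : ℕ}
    (A A' : Matrix (Fin n) (Fin n) ℝ) (x₀ x₀' : Fin n → ℝ)
    (C C' : Matrix (Fin k) (Fin n) ℝ)
    (h : ∀ m : ℕ, m < 2 * n →
      C.mulVec ((A ^ m).mulVec x₀) = C'.mulVec ((A' ^ m).mulVec x₀')) :
    ∀ m : ℕ, C.mulVec ((A ^ m).mulVec x₀) = C'.mulVec ((A' ^ m).mulVec x₀') := by
  intro m
  let L : Matrix (Fin n) (Fin n) ℝ × Matrix (Fin n) (Fin n) ℝ →ₗ[ℝ] Fin k → ℝ :=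
    { toFun := fun P => C *ᵥ (P.1 *ᵥ x₀) - C' *ᵥ (P.2 *ᵥ x₀')
      map_add' := fun P Q => by
        simp only [Prod.fst_add, Prod.snd_add, add_mulVec, mulVec_add]
        abel
      map_smul' := fun c P => by
        simp only [Prod.smul_fst, Prod.smul_snd, smul_mulVec, mulVec_smul, smul_sub,
          RingHom.id_apply] }
  set p := A.charpoly * A'.charpoly
  have hp : p.Monic := A.charpoly_monic.mul A'.charpoly_monic
  have hdeg : p.natDegree = 2 * n := by
    simp [p, A.charpoly_monic.natDegree_mul A'.charpoly_monic, two_mul]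
  have hroot : aeval (A, A') p = 0 := by
    simp [p, aeval_prod_apply, aeval_self_charpoly]
  have hker : Submodule.span ℝ ((fun i => (A, A') ^ i) '' Set.Iio p.natDegree) ≤ L.ker := by
    rw [Submodule.span_le]
    rintro _ ⟨i, hi, rfl⟩
    simpa [L, sub_eq_zero] using h i (hdeg ▸ hi)
  simpa [L, sub_eq_zero] using hker (pow_mem_span_pow_lt_natDegree hp hroot m)
end
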